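/- arXiv:2312.04027 — 2 statements merged into one kernel-verified Lean document; each statement's English description precedes it below -/
import Mathlib

section
/- Let p be a probability distribution on [k] and let ℓ : [k] → [0,1]. Suppose there exists a threshold value c ∈ [0,1] and an index ordering such that ℓ is non-increasing, and let k' be the smallest index with ∑_{i ≤ k'} p(i) ≥ 1/2. If ℓ(k') ≥ c and the weighted average of ℓ over any subset I ⊆ [k] with ∑_{i∈I} p(i) ≥ 1/2 (normalized by its mass) is at most V, then ∑_{i∈[k]} p(i)·max{ℓ(i), c} ≤ V. -/
open Finset

theorem stmt0 (k : ℕ) (p ℓ : Fin k → ℝ) (c V : ℝ)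
    (hp0 : ∀ i, 0 ≤ p i) (hp1 : ∑ i, p i = 1)
    (hℓ : ∀ i, ℓ i ∈ Set.Icc (0:ℝ) 1) (hc : c ∈ Set.Icc (0:ℝ) 1)
    (hmono : ∀ i j : Fin k, i ≤ j → ℓ j ≤ ℓ i)
    (k' : Fin k) (hk'1 : 1/2 ≤ ∑ i ∈ Finset.Iic k', p i)
    (hk'2 : ∀ j : Fin k, j < k' → ∑ i ∈ Finset.Iic j, p i < 1/2)
    (hck' : c ≤ ℓ k')
    (hV : ∀ I : Finset (Fin k), 1/2 ≤ ∑ i ∈ I, p i →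
      (∑ i ∈ I, p i * ℓ i) / (∑ i ∈ I, p i) ≤ V) :
    ∑ i, p i * max (ℓ i) c ≤ V := by
  set I : Finset (Fin k) := Finset.Iic k' with hI
  set S : ℝ := ∑ i ∈ I, p i with hS
  have hSpos : (0:ℝ) < S := lt_of_lt_of_le (by norm_num) hk'1
  set A : ℝ := (∑ i ∈ I, p i * ℓ i) / S with hA
  have hAV : A ≤ V := hV I hk'1
  have hℓk'A : ℓ k' ≤ A := by
    rw [hA, le_div_iff₀ hSpos]
    calc ℓ k' * S = ∑ i ∈ I, p i * ℓ k' := by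
          rw [← Finset.sum_mul]; ring
      _ ≤ ∑ i ∈ I, p i * ℓ i := by
          apply Finset.sum_le_sum
          intro i hi
          exact mul_le_mul_of_nonneg_left (hmono i k' (Finset.mem_Iic.mp hi)) (hp0 i)
  have hsplit : ∑ i ∈ I, p i * max (ℓ i) c + ∑ i ∈ Iᶜ, p i * max (ℓ i) c
      = ∑ i, p i * max (ℓ i) c := Finset.sum_add_sum_compl I _
  have h1 : ∑ i ∈ I, p i * max (ℓ i) c = S * A := by
    have : ∑ i ∈ I, p i * max (ℓ i) c = ∑ i ∈ I, p i * ℓ i := by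
      apply Finset.sum_congr rfl
      intro i hi
      rw [max_eq_left (le_trans hck' (hmono i k' (Finset.mem_Iic.mp hi)))]
    rw [this, hA, mul_div_cancel₀ _ (ne_of_gt hSpos)]
  have h2 : ∑ i ∈ Iᶜ, p i * max (ℓ i) c ≤ (1 - S) * A := by
    have hcompl : ∑ i ∈ Iᶜ, p i = 1 - S := by
      have := Finset.sum_add_sum_compl I p
      rw [hp1] at this; linarith
    calc ∑ i ∈ Iᶜ, p i * max (ℓ i) c ≤ ∑ i ∈ Iᶜ, p i * A := by
          apply Finset.sum_le_sum
          intro i hi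
          have hki : k' ≤ i := le_of_lt (by
            simpa [hI, Finset.mem_compl, Finset.mem_Iic, not_le] using hi)
          exact mul_le_mul_of_nonneg_left
            (max_le (le_trans (hmono k' i hki) hℓk'A) (le_trans hck' hℓk'A)) (hp0 i)
      _ = (1 - S) * A := by rw [← Finset.sum_mul, hcompl]
  calc ∑ i, p i * max (ℓ i) c = S * A + ∑ i ∈ Iᶜ, p i * max (ℓ i) c := by
        rw [← hsplit, h1]
    _ ≤ S * A + (1 - S) * A := by linarith
    _ = A := by ring
    _ ≤ V := hAV
end

section
/- Let p be a probability distribution on [k] and ℓ : [k] → ℝ. Sort indices so that ℓ is non-increasing and let k' be the smallest index with ∑_{i ≤ k'} p(i) ≥ 1/2. Suppose ℓ(i) ≤ M for all i, and ℓ(k') < c where M ≥ c. Then ∑_{i∈[k]} p(i)·max{ℓ(i), c} ≤ (1/2)·M + (1/2)·c ≤ (M + c)/2. -/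
open Finset

theorem stmt1 (k : ℕ) (p ℓ : Fin k → ℝ) (c M : ℝ)
    (hp0 : ∀ i, 0 ≤ p i) (hp1 : ∑ i, p i = 1)
    (hMc : c ≤ M) (hub : ∀ i, ℓ i ≤ M)
    (hmono : ∀ i j : Fin k, i ≤ j → ℓ j ≤ ℓ i)
    (k' : Fin k) (hk'1 : 1/2 ≤ ∑ i ∈ Finset.Iic k', p i)
    (hk'2 : ∀ j : Fin k, j < k' → ∑ i ∈ Finset.Iic j, p i < 1/2)
    (hℓk' : ℓ k' < c) :
    ∑ i, p i * max (ℓ i) c ≤ (1/2) * M + (1/2) * c ∧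
      (1/2) * M + (1/2) * c ≤ (M + c) / 2 := by
  constructor
  · -- split the sum over Iio k' and its complement
    have hsplit : ∑ i, p i * max (ℓ i) c
        = ∑ i ∈ Finset.Iio k', p i * max (ℓ i) c
          + ∑ i ∈ (Finset.Iio k')ᶜ, p i * max (ℓ i) c :=
      (Finset.sum_add_sum_compl _ _).symm
    have hS : ∑ i ∈ Finset.Iio k', p i ≤ 1/2 := by
      rcases Nat.eq_zero_or_pos k'.val with h0 | hpos
      · have : Finset.Iio k' = ∅ := by
          ext i
          simp [Fin.lt_def, h0]
        simp [this]
      · have hklt := k'.isLt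
        set j : Fin k := ⟨k'.val - 1, by omega⟩ with hj
        have hjlt : j < k' := by
          simp only [Fin.lt_def, hj]; omega
        have hIio : Finset.Iio k' = Finset.Iic j := by
          ext i
          simp only [Finset.mem_Iio, Finset.mem_Iic, Fin.lt_def, Fin.le_def, hj]
          omega
        rw [hIio]
        exact le_of_lt (hk'2 j hjlt)
    have hTsum : ∑ i ∈ Finset.Iio k', p i + ∑ i ∈ (Finset.Iio k')ᶜ, p i = 1 := by
      rw [Finset.sum_add_sum_compl]; exact hp1
    have h1 : ∑ i ∈ Finset.Iio k', p i * max (ℓ i) c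
        ≤ (∑ i ∈ Finset.Iio k', p i) * M := by
      rw [Finset.sum_mul]
      apply Finset.sum_le_sum
      intro i _
      exact mul_le_mul_of_nonneg_left (max_le (hub i) hMc) (hp0 i)
    have h2 : ∑ i ∈ (Finset.Iio k')ᶜ, p i * max (ℓ i) c
        = (∑ i ∈ (Finset.Iio k')ᶜ, p i) * c := by
      rw [Finset.sum_mul]
      apply Finset.sum_congr rfl
      intro i hi
      have hki : k' ≤ i := by simpa using hi
      have : ℓ i < c := lt_of_le_of_lt (hmono k' i hki) hℓk'
      rw [max_eq_right this.le]
    rw [hsplit]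
    set S := ∑ i ∈ Finset.Iio k', p i
    set T := ∑ i ∈ (Finset.Iio k')ᶜ, p i
    have hT' : T = 1 - S := by linarith
    have : S * M + T * c ≤ 1/2 * M + 1/2 * c := by
      rw [hT']
      nlinarith [mul_nonneg (by linarith : (0:ℝ) ≤ 1/2 - S) (by linarith : (0:ℝ) ≤ M - c)]
    linarith
  · linarith
end
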